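/- Fix a power of two n ≥ 2, a positive integer d, N = n^d, and an integer k with 1 ≤ k ≤ N. Let S be a Bernoulli set with rate k/N in (ZMod n)^d, and let B = (B_1,…,B_d) be a vector of powers of two with B_q dividing n for each q. Then for every fixed f ∈ [B], the probability that f ∈ S^(B) is at most (k/|B|)². -/

import Mathlib

open scoped BigOperators ENNReal
open MeasureTheory

/-! The fibre of `f` under coordinatewise reduction has `n ^ d / |B|` points, and `f ∈ S^(B)`
needs two distinct points of that fibre in `S`. A union bound over ordered pairs of fibre points,
each pair lying in `S` with probability `(k / n ^ d) ^ 2` by independence, gives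
`(n ^ d / |B|) ^ 2 * (k / n ^ d) ^ 2 = (k / |B|) ^ 2`. -/

open ProbabilityTheory Finset

theorem AddMonoidHom.card_fiber_mul_card_of_surjective {G H : Type*} [AddGroup G] [AddGroup H]
    [Finite G] {φ : G →+ H} (hφ : Function.Surjective φ) (y : H) :
    Nat.card (φ ⁻¹' {y}) * Nat.card H = Nat.card G := by
  rw [Nat.card_congr (φ.fiberEquivKerOfSurjective hφ y),
    ← Nat.card_congr (QuotientAddGroup.quotientKerEquivOfSurjective φ hφ).toEquiv, mul_comm,
    ← AddSubgroup.card_eq_card_quotient_mul_card_addSubgroup]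

section Bernoulli

variable {p : ℝ≥0∞}

theorem isProbabilityMeasure_bernoulli (hp : p ≤ 1) :
    IsProbabilityMeasure ((1 - p) • Measure.dirac false + p • Measure.dirac true : Measure Bool) :=
  ⟨by simp [tsub_add_cancel_of_le hp]⟩

theorem bernoulli_singleton_true :
    ((1 - p) • Measure.dirac false + p • Measure.dirac true : Measure Bool) {true} = p := by
  simp

end Bernoulli

namespace MeasureTheory.Measure

variable {ι α : Type*} [Fintype ι] [MeasurableSpace α] (ν : Measure α) [IsProbabilityMeasure ν]

theorem pi_eval_mem_and_eval_mem {i j : ι} (hij : i ≠ j) {s t : Set α}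
    (hs : MeasurableSet s) (ht : MeasurableSet t) :
    Measure.pi (fun _ : ι => ν) {ω | ω i ∈ s ∧ ω j ∈ t} = ν s * ν t := by
  have hind : IndepFun (fun ω : ι → α => ω i) (fun ω => ω j) (Measure.pi fun _ => ν) :=
    (iIndepFun_pi (X := fun _ => id) fun _ => aemeasurable_id).indepFun hij
  have hi : Measure.pi (fun _ : ι => ν) {ω | ω i ∈ s} = ν s :=
    (measurePreserving_eval _ i).measure_preimage hs.nullMeasurableSet
  have hj : Measure.pi (fun _ : ι => ν) {ω | ω j ∈ t} = ν t :=
    (measurePreserving_eval _ j).measure_preimage ht.nullMeasurableSet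
  rw [← hi, ← hj]
  exact hind.measure_inter_preimage_eq_mul s t hs ht

theorem pi_exists_pair_mem_le [DecidableEq ι] (F : Finset ι) {s : Set α}
    (hs : MeasurableSet s) :
    Measure.pi (fun _ : ι => ν) {ω | ∃ g ∈ F, ∃ h ∈ F, g ≠ h ∧ ω g ∈ s ∧ ω h ∈ s} ≤
      (#F * ν s) ^ 2 := by
  have hsub : {ω : ι → α | ∃ g ∈ F, ∃ h ∈ F, g ≠ h ∧ ω g ∈ s ∧ ω h ∈ s} ⊆
      ⋃ gh ∈ F.offDiag, {ω | ω gh.1 ∈ s ∧ ω gh.2 ∈ s} := by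
    rintro ω ⟨g, hg, h, hh, hgh, hωg, hωh⟩
    exact Set.mem_iUnion₂.2 ⟨(g, h), Finset.mem_offDiag.2 ⟨hg, hh, hgh⟩, hωg, hωh⟩
  calc _ ≤ ∑ gh ∈ F.offDiag, Measure.pi (fun _ : ι => ν) {ω | ω gh.1 ∈ s ∧ ω gh.2 ∈ s} :=
        (measure_mono hsub).trans (measure_biUnion_finset_le _ _)
    _ = #F.offDiag * (ν s * ν s) := by
        rw [Finset.sum_congr rfl fun gh hgh =>
          pi_eval_mem_and_eval_mem ν (Finset.mem_offDiag.1 hgh).2.2 hs hs, sum_const, nsmul_eq_mul]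
    _ ≤ (#F * #F : ℕ) * (ν s * ν s) := by
        gcongr
        rw [Finset.offDiag_card]
        exact Nat.sub_le _ _
    _ = (#F * ν s) ^ 2 := by push_cast; ring

end MeasureTheory.Measure

namespace ZMod

variable {ι : Type*} {n : ℕ} {B : ι → ℕ}

def piCastHom (hB : ∀ q, B q ∣ n) : (ι → ZMod n) →+* ∀ q, ZMod (B q) :=
  RingHom.pi fun q => (castHom (hB q) _).comp (Pi.evalRingHom _ q)

theorem piCastHom_apply (hB : ∀ q, B q ∣ n) (g : ι → ZMod n) (q : ι) :
    piCastHom hB g q = castHom (hB q) _ (g q) := rfl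

theorem piCastHom_surjective (hB : ∀ q, B q ∣ n) : Function.Surjective (piCastHom hB) :=
  Function.Surjective.piMap fun q => ringHom_surjective (castHom (hB q) _)

theorem card_piCastHom_fiber_mul [Fintype ι] [NeZero n] (hB : ∀ q, B q ∣ n)
    (f : ∀ q, ZMod (B q)) :
    Nat.card (piCastHom hB ⁻¹' {f}) * ∏ q, B q = n ^ Fintype.card ι := by
  have := (piCastHom hB).toAddMonoidHom.card_fiber_mul_card_of_surjective
    (piCastHom_surjective hB) f
  simpa [Nat.card_pi, Nat.card_zmod] using this

end ZMod

theorem stmt11 (n : ℕ) [NeZero n]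
    (d : ℕ) (k : ℕ) (hkN : k ≤ n ^ d)
    (B : Fin d → ℕ) (hB : ∀ q, B q ∣ n)
    (μ : Measure ((Fin d → ZMod n) → Bool))
    (hμ : μ = Measure.pi fun _ : Fin d → ZMod n =>
      (1 - (k : ℝ≥0∞) / ((n : ℝ≥0∞) ^ d)) • Measure.dirac false +
        ((k : ℝ≥0∞) / ((n : ℝ≥0∞) ^ d)) • Measure.dirac true)
    (f : ∀ q, ZMod (B q)) :
    μ {ω | ∃ g h : Fin d → ZMod n, g ≠ h ∧ ω g = true ∧ ω h = true ∧
        (∀ q, ZMod.castHom (hB q) (ZMod (B q)) (g q) = f q) ∧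
        (∀ q, ZMod.castHom (hB q) (ZMod (B q)) (h q) = f q)}
      ≤ ((k : ℝ≥0∞) / ∏ q, ((B q : ℕ) : ℝ≥0∞)) ^ 2 := by
  classical
  set p : ℝ≥0∞ := (k : ℝ≥0∞) / ((n : ℝ≥0∞) ^ d)
  have hp : p ≤ 1 := ENNReal.div_le_of_le_mul (by rw [one_mul]; exact_mod_cast hkN)
  set ν : Measure Bool := (1 - p) • Measure.dirac false + p • Measure.dirac true
  have := isProbabilityMeasure_bernoulli hp
  set F : Finset (Fin d → ZMod n) := (ZMod.piCastHom hB ⁻¹' {f}).toFinset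
  have hF : #F * ∏ q, B q = n ^ d := by
    simpa [F, Nat.card_eq_card_toFinset] using ZMod.card_piCastHom_fiber_mul hB f
  have hmemF {g : Fin d → ZMod n} (hg : ∀ q, ZMod.castHom (hB q) (ZMod (B q)) (g q) = f q) :
      g ∈ F := by
    simpa [F, funext_iff, ZMod.piCastHom_apply] using hg
  have hbound := Measure.pi_exists_pair_mem_le ν F (measurableSet_singleton true)
  rw [show ν {true} = p from bernoulli_singleton_true] at hbound
  calc _ ≤ (#F * p) ^ 2 := by
        rw [hμ]
        refine (measure_mono ?_).trans hbound
        rintro ω ⟨g, h, hgh, hωg, hωh, hg, hh⟩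
        exact ⟨g, hmemF hg, h, hmemF hh, hgh, hωg, hωh⟩
    _ = _ := by
        have hF0 : (#F : ℝ≥0∞) ≠ 0 := by
          have : n ^ d ≠ 0 := pow_ne_zero d (NeZero.ne n)
          exact_mod_cast left_ne_zero_of_mul (hF ▸ this)
        have hN : (n : ℝ≥0∞) ^ d = #F * ∏ q, (B q : ℝ≥0∞) := by exact_mod_cast hF.symm
        rw [show p = k / (n : ℝ≥0∞) ^ d from rfl, hN, ← mul_div_assoc,
          ENNReal.mul_div_mul_left _ _ hF0 (ENNReal.natCast_ne_top _)]
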